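/- arXiv:2501.13404 — 3 statements merged into one kernel-verified Lean document; each statement's English description precedes it below -/
import Mathlib

section
/- Let n ≥ 4 and let m₂₂, m₃₂ ∈ ℂ with m₂₂·m₃₂ ≠ 0. Put M = [[1,−m₂₂/m₃₂,0],[0,m₂₂,0],[0,m₃₂,1]] and let N = (n_{pq}) be a 3×3 complex matrix. If the pair (M,N) satisfies the SMₙ mixed relations on M_{n+1}(ℂ), then n₁₁ = 1, n₁₃ = n₂₁ = n₂₃ = n₃₁ = 0, n₃₃ = 1, n₂₂ = 1 − m₃₂n₁₂ + m₃₂n₁₂/m₂₂, and n₃₂ = −m₃₂²n₁₂/m₂₂. -/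
open Matrix

def loc3 (m i : ℕ) (P : Matrix (Fin 3) (Fin 3) ℂ) : Matrix (Fin m) (Fin m) ℂ :=
  Matrix.of fun r s =>
    if (r : ℕ) = i - 1 ∧ (s : ℕ) = i - 1 then P 0 0
    else if (r : ℕ) = i - 1 ∧ (s : ℕ) = i then P 0 1
    else if (r : ℕ) = i - 1 ∧ (s : ℕ) = i + 1 then P 0 2
    else if (r : ℕ) = i ∧ (s : ℕ) = i - 1 then P 1 0
    else if (r : ℕ) = i ∧ (s : ℕ) = i then P 1 1
    else if (r : ℕ) = i ∧ (s : ℕ) = i + 1 then P 1 2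
    else if (r : ℕ) = i + 1 ∧ (s : ℕ) = i - 1 then P 2 0
    else if (r : ℕ) = i + 1 ∧ (s : ℕ) = i then P 2 1
    else if (r : ℕ) = i + 1 ∧ (s : ℕ) = i + 1 then P 2 2
    else if r = s then 1 else 0

/-- The pair `(M, N)` of 3×3 complex matrices satisfies the SMₙ mixed relations
on `M_{n+1}(ℂ)`. -/
def SMRel3 (n : ℕ) (M N : Matrix (Fin 3) (Fin 3) ℂ) : Prop :=
  (∀ i j : ℕ, 1 ≤ i → i ≤ n - 1 → 1 ≤ j → j ≤ n - 1 → (i + 2 ≤ j ∨ j + 2 ≤ i) →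
      loc3 (n + 1) i N * loc3 (n + 1) j N = loc3 (n + 1) j N * loc3 (n + 1) i N) ∧
  (∀ i j : ℕ, 1 ≤ i → i ≤ n - 1 → 1 ≤ j → j ≤ n - 1 → (i + 2 ≤ j ∨ j + 2 ≤ i) →
      loc3 (n + 1) i N * loc3 (n + 1) j M = loc3 (n + 1) j M * loc3 (n + 1) i N) ∧
  (∀ i : ℕ, 1 ≤ i → i ≤ n - 1 →
      loc3 (n + 1) i M * loc3 (n + 1) i N = loc3 (n + 1) i N * loc3 (n + 1) i M) ∧
  (∀ i : ℕ, 1 ≤ i → i ≤ n - 2 →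
      loc3 (n + 1) i M * loc3 (n + 1) (i + 1) M * loc3 (n + 1) i N
        = loc3 (n + 1) (i + 1) N * loc3 (n + 1) i M * loc3 (n + 1) (i + 1) M) ∧
  (∀ i : ℕ, 1 ≤ i → i ≤ n - 2 →
      loc3 (n + 1) (i + 1) M * loc3 (n + 1) i M * loc3 (n + 1) (i + 1) N
        = loc3 (n + 1) i N * loc3 (n + 1) (i + 1) M * loc3 (n + 1) i M)

/-!
For `i ≤ 3` each `Lᵢ(P)` is the identity outside the top-left `5 × 5` block, so the relations
involving `σ₁, σ₂, σ₃, τ₁, τ₂, τ₃` (available since `n ≥ 4`) restrict to `M₅(ℂ)`. There, single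
entries of `τ₁σ₃ = σ₃τ₁` and `τ₃σ₁ = σ₁τ₃` force the off-diagonal entries in the last and first
columns of `N` to vanish and its corner entries to be `1`, because `M₁₂ = -m₂₂/m₃₂` and
`M₃₂ = m₃₂` are nonzero. The `(1, 2)` entry of `MN = NM` then gives `n₂₂`, and the `(1, 2)` entry
of the braid relation `σ₁σ₂τ₁ = τ₂σ₁σ₂` gives `n₃₂`.
-/

section TopLeft

variable {α : Type*} [NonUnitalNonAssocSemiring α] {m k : ℕ}

def topLeft (hk : k ≤ m) (A : Matrix (Fin m) (Fin m) α) : Matrix (Fin k) (Fin k) α :=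
  A.submatrix (Fin.castLE hk) (Fin.castLE hk)

lemma topLeft_mul (hk : k ≤ m) {A : Matrix (Fin m) (Fin m) α} (B : Matrix (Fin m) (Fin m) α)
    (hA : ∀ r c : Fin m, (r : ℕ) < k → k ≤ (c : ℕ) → A r c = 0) :
    topLeft hk (A * B) = topLeft hk A * topLeft hk B := by
  ext r s
  refine (Fintype.sum_of_injective _ (Fin.castLE_injective hk) _ _ (fun c hc => ?_)
    fun _ => rfl).symm
  have hkc : k ≤ (c : ℕ) := not_lt.1 fun hck => hc ⟨⟨c, hck⟩, rfl⟩
  exact mul_eq_zero_of_left (hA _ c r.isLt hkc) _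

end TopLeft

section Loc3

variable {m k i : ℕ} (P : Matrix (Fin 3) (Fin 3) ℂ)

lemma loc3_apply_eq_zero {r c : Fin m} (hi : i + 2 ≤ k) (hr : (r : ℕ) < k) (hc : k ≤ (c : ℕ)) :
    loc3 m i P r c = 0 := by
  have hrc : r ≠ c := Fin.ne_of_lt (by omega)
  simp only [loc3, Matrix.of_apply]
  split_ifs <;> first | omega | rfl

lemma topLeft_loc3 (hk : k ≤ m) : topLeft hk (loc3 m i P) = loc3 k i P := by
  ext r s
  simp only [topLeft, Matrix.submatrix_apply, loc3, Matrix.of_apply, Fin.val_castLE,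
    (Fin.castLE_injective hk).eq_iff]

lemma topLeft_loc3_mul (hk : k ≤ m) (hi : i + 2 ≤ k) (B : Matrix (Fin m) (Fin m) ℂ) :
    topLeft hk (loc3 m i P * B) = loc3 k i P * topLeft hk B := by
  rw [topLeft_mul hk B fun _ _ => loc3_apply_eq_zero P hi, topLeft_loc3]

end Loc3

lemma SMRel3.topLeft_five {n : ℕ} {M N : Matrix (Fin 3) (Fin 3) ℂ} (h : SMRel3 n M N)
    (hn : 4 ≤ n) :
    Commute (loc3 5 1 N) (loc3 5 3 M) ∧ Commute (loc3 5 3 N) (loc3 5 1 M) ∧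
      Commute (loc3 5 1 M) (loc3 5 1 N) ∧
      loc3 5 1 M * loc3 5 2 M * loc3 5 1 N = loc3 5 2 N * loc3 5 1 M * loc3 5 2 M := by
  have h5 : 5 ≤ n + 1 := by omega
  obtain ⟨-, hNM, hMN, hbraid, -⟩ := h
  refine ⟨?_, ?_, ?_, ?_⟩ <;>
    [have e := hNM 1 3 le_rfl (by omega) (by omega) (by omega) (by omega);
      have e := hNM 3 1 (by omega) (by omega) le_rfl (by omega) (by omega);
      have e := hMN 1 le_rfl (by omega); have e := hbraid 1 le_rfl (by omega)] <;>
    simpa only [mul_assoc, topLeft_loc3_mul _ h5, topLeft_loc3, commute_iff_eq,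
      Nat.reduceAdd, Nat.reduceLeDiff] using congrArg (topLeft h5) e

section Entries

variable {P Q : Matrix (Fin 3) (Fin 3) ℂ}

lemma commute_of_commute_loc3_one (h : Commute (loc3 5 1 P) (loc3 5 1 Q)) : Commute P Q := by
  ext p q
  have hpq := congrFun₂ h.eq (Fin.castLE (by norm_num) p) (Fin.castLE (by norm_num) q)
  fin_cases p <;> fin_cases q <;>
    simpa [loc3, Matrix.mul_apply, Fin.sum_univ_five, Fin.sum_univ_three] using hpq

lemma entries_of_commute_loc3_one_three (hP : P 0 1 ≠ 0)
    (h : Commute (loc3 5 1 Q) (loc3 5 3 P)) : Q 0 2 = 0 ∧ Q 1 2 = 0 ∧ Q 2 2 = 1 := by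
  refine ⟨?_, ?_, ?_⟩ <;> [have e := congrFun₂ h.eq 0 3; have e := congrFun₂ h.eq 1 3;
    have e := congrFun₂ h.eq 2 3] <;>
    simpa [loc3, Matrix.mul_apply, Fin.sum_univ_five, hP] using e

lemma entries_of_commute_loc3_three_one (hP : P 2 1 ≠ 0)
    (h : Commute (loc3 5 3 Q) (loc3 5 1 P)) : Q 0 0 = 1 ∧ Q 1 0 = 0 ∧ Q 2 0 = 0 := by
  refine ⟨?_, ?_, ?_⟩ <;> [have e := congrFun₂ h.eq 2 1; have e := congrFun₂ h.eq 3 1;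
    have e := congrFun₂ h.eq 4 1] <;>
    simpa [loc3, Matrix.mul_apply, Fin.sum_univ_five, hP] using e

end Entries

lemma braid_entry_zero_one {a b : ℂ} {N : Matrix (Fin 3) (Fin 3) ℂ}
    (h : loc3 5 1 !![1, -a / b, 0; 0, a, 0; 0, b, 1] * loc3 5 2 !![1, -a / b, 0; 0, a, 0; 0, b, 1]
        * loc3 5 1 N
      = loc3 5 2 N * loc3 5 1 !![1, -a / b, 0; 0, a, 0; 0, b, 1]
        * loc3 5 2 !![1, -a / b, 0; 0, a, 0; 0, b, 1]) :
    N 0 1 + -a / b * N 1 1 + -a / b * (-a / b) * N 2 1 = -a / b := by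
  simpa [loc3, Matrix.mul_apply, Fin.sum_univ_five] using congrFun₂ h 0 1

theorem stmt11 (n : ℕ) (hn : 4 ≤ n) (m22 m32 : ℂ) (hm : m22 * m32 ≠ 0)
    (N : Matrix (Fin 3) (Fin 3) ℂ)
    (h : SMRel3 n !![1, -m22 / m32, 0; 0, m22, 0; 0, m32, 1] N) :
    N 0 0 = 1 ∧ N 0 2 = 0 ∧ N 1 0 = 0 ∧ N 1 2 = 0 ∧ N 2 0 = 0 ∧ N 2 2 = 1 ∧
    N 1 1 = 1 - m32 * N 0 1 + m32 * N 0 1 / m22 ∧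
    N 2 1 = -(m32 ^ 2 * N 0 1) / m22 := by
  have ha : m22 ≠ 0 := left_ne_zero_of_mul hm
  have hb : m32 ≠ 0 := right_ne_zero_of_mul hm
  obtain ⟨h13, h31, hcomm, hbraid⟩ := h.topLeft_five hn
  obtain ⟨h02, h12, h22⟩ :=
    entries_of_commute_loc3_one_three (div_ne_zero (neg_ne_zero.2 ha) hb) h13
  obtain ⟨h00, h10, h20⟩ := entries_of_commute_loc3_three_one hb h31
  have h11 : N 1 1 = 1 - m32 * N 0 1 + m32 * N 0 1 / m22 := by
    have h01 := congrFun₂ (commute_of_commute_loc3_one hcomm).eq 0 1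
    simp only [Matrix.mul_apply, Fin.sum_univ_three, of_apply, cons_val', cons_val_fin_one,
      cons_val_zero, cons_val_one, cons_val, one_mul, zero_mul, add_zero, h00, h02] at h01
    linear_combination (norm := skip) (-m32 / m22) * h01
    field_simp
    ring
  have h21 : N 2 1 = -(m32 ^ 2 * N 0 1) / m22 := by
    linear_combination (norm := skip)
      (m32 ^ 2 / m22 ^ 2) * braid_entry_zero_one hbraid + (m32 / m22) * h11
    field_simp
    ring
  exact ⟨h00, h02, h10, h12, h20, h22, h11, h21⟩
end

section
/- Let n ≥ 4 and let m₂₃, m₃₂ ∈ ℂ with m₂₃·m₃₂ ≠ 0. Put M = [[1,0,0],[0,0,m₂₃],[0,m₃₂,0]] and let N = (n_{pq}) be a 3×3 complex matrix. If the pair (M,N) satisfies the SMₙ mixed relations on M_{n+1}(ℂ), then n₁₁ = 1, n₁₂ = n₁₃ = n₂₁ = n₃₁ = 0, n₃₂ = m₃₂n₂₃/m₂₃, and n₃₃ = n₂₂. -/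
open Matrix

/-- The top-left 5×5 corner of an `(n+1)×(n+1)` matrix. -/
def corner5 {n : ℕ} (h5 : 5 ≤ n + 1) (A : Matrix (Fin (n+1)) (Fin (n+1)) ℂ) :
    Matrix (Fin 5) (Fin 5) ℂ :=
  Matrix.of fun r s => A (Fin.castLE h5 r) (Fin.castLE h5 s)

/-- `A` vanishes on entries with row index `< 5` and column index `≥ 5`. -/
def supp5 {n : ℕ} (A : Matrix (Fin (n+1)) (Fin (n+1)) ℂ) : Prop :=
  ∀ r k : Fin (n+1), (r : ℕ) < 5 → 5 ≤ (k : ℕ) → A r k = 0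

lemma supp5_loc3 {n : ℕ} (i : ℕ) (hi : i ≤ 3) (P : Matrix (Fin 3) (Fin 3) ℂ) :
    supp5 (loc3 (n+1) i P) := by
  intro r k hr hk
  simp only [loc3, of_apply]
  rw [if_neg (by omega), if_neg (by omega), if_neg (by omega), if_neg (by omega),
    if_neg (by omega), if_neg (by omega), if_neg (by omega), if_neg (by omega),
    if_neg (by omega), if_neg (fun hrk => by omega)]

lemma supp5_mul {n : ℕ} {A B : Matrix (Fin (n+1)) (Fin (n+1)) ℂ}
    (hA : supp5 A) (hB : supp5 B) : supp5 (A * B) := by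
  intro r k hr hk
  rw [Matrix.mul_apply]
  apply Finset.sum_eq_zero
  intro t _
  by_cases ht : (t : ℕ) < 5
  · rw [hB t k ht hk, mul_zero]
  · rw [hA r t hr (by omega), zero_mul]

lemma corner5_mul {n : ℕ} (h5 : 5 ≤ n + 1) (A B : Matrix (Fin (n+1)) (Fin (n+1)) ℂ)
    (hA : supp5 A) : corner5 h5 (A * B) = corner5 h5 A * corner5 h5 B := by
  ext r s
  show (A * B) (Fin.castLE h5 r) (Fin.castLE h5 s) = _
  rw [Matrix.mul_apply, Matrix.mul_apply]
  rw [← Finset.sum_subset (Finset.subset_univ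
    ((Finset.univ : Finset (Fin 5)).map ⟨Fin.castLE h5, Fin.castLE_injective h5⟩))
    (fun x _ hx => by
      have hx5 : 5 ≤ (x : ℕ) := by
        by_contra hlt
        exact hx (Finset.mem_map.2 ⟨⟨(x : ℕ), by omega⟩, Finset.mem_univ _, by ext; simp⟩)
      rw [hA _ _ (by simp) hx5, zero_mul]),
    Finset.sum_map]
  rfl

lemma corner5_loc3 {n : ℕ} (h5 : 5 ≤ n + 1) (i : ℕ) (P : Matrix (Fin 3) (Fin 3) ℂ) :
    corner5 h5 (loc3 (n+1) i P) = loc3 5 i P := by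
  ext r s
  simp [corner5, loc3, Fin.castLE_inj]

lemma loc3_51 (P : Matrix (Fin 3) (Fin 3) ℂ) :
    loc3 5 1 P = !![P 0 0, P 0 1, P 0 2, 0, 0; P 1 0, P 1 1, P 1 2, 0, 0;
      P 2 0, P 2 1, P 2 2, 0, 0; 0, 0, 0, 1, 0; 0, 0, 0, 0, 1] := by
  ext r s
  fin_cases r <;> fin_cases s <;> rfl

lemma loc3_52 (P : Matrix (Fin 3) (Fin 3) ℂ) :
    loc3 5 2 P = !![1, 0, 0, 0, 0; 0, P 0 0, P 0 1, P 0 2, 0; 0, P 1 0, P 1 1, P 1 2, 0;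
      0, P 2 0, P 2 1, P 2 2, 0; 0, 0, 0, 0, 1] := by
  ext r s
  fin_cases r <;> fin_cases s <;> rfl

theorem stmt15 (n : ℕ) (hn : 4 ≤ n) (m23 m32 : ℂ) (hm : m23 * m32 ≠ 0)
    (N : Matrix (Fin 3) (Fin 3) ℂ)
    (h : SMRel3 n !![1, 0, 0; 0, 0, m23; 0, m32, 0] N) :
    N 0 0 = 1 ∧ N 0 1 = 0 ∧ N 0 2 = 0 ∧ N 1 0 = 0 ∧ N 2 0 = 0 ∧
    N 2 1 = m32 * N 1 2 / m23 ∧ N 2 2 = N 1 1 := by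
  have ha : m23 ≠ 0 := fun h0 => hm (by rw [h0, zero_mul])
  have hb : m32 ≠ 0 := fun h0 => hm (by rw [h0, mul_zero])
  have h5 : 5 ≤ n + 1 := by omega
  set M : Matrix (Fin 3) (Fin 3) ℂ := !![1, 0, 0; 0, 0, m23; 0, m32, 0] with hMdef
  have r3 := h.2.2.1 1 le_rfl (by omega)
  have r4 := h.2.2.2.1 1 le_rfl (by omega)
  have r5 := h.2.2.2.2 1 le_rfl (by omega)
  have sM1 : supp5 (loc3 (n+1) 1 M) := supp5_loc3 1 (by omega) M
  have sM2 : supp5 (loc3 (n+1) (1+1) M) := supp5_loc3 (1+1) (by omega) M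
  have sN1 : supp5 (loc3 (n+1) 1 N) := supp5_loc3 1 (by omega) N
  have sN2 : supp5 (loc3 (n+1) (1+1) N) := supp5_loc3 (1+1) (by omega) N
  have e3 : loc3 5 1 M * loc3 5 1 N = loc3 5 1 N * loc3 5 1 M := by
    have := congrArg (corner5 h5) r3
    rwa [corner5_mul _ _ _ sM1, corner5_mul _ _ _ sN1, corner5_loc3, corner5_loc3] at this
  have e4 : loc3 5 1 M * loc3 5 (1+1) M * loc3 5 1 N
      = loc3 5 (1+1) N * loc3 5 1 M * loc3 5 (1+1) M := by
    have := congrArg (corner5 h5) r4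
    rwa [corner5_mul _ _ _ (supp5_mul sM1 sM2), corner5_mul _ _ _ sM1,
      corner5_mul _ _ _ (supp5_mul sN2 sM1), corner5_mul _ _ _ sN2,
      corner5_loc3, corner5_loc3, corner5_loc3, corner5_loc3] at this
  have e5 : loc3 5 (1+1) M * loc3 5 1 M * loc3 5 (1+1) N
      = loc3 5 1 N * loc3 5 (1+1) M * loc3 5 1 M := by
    have := congrArg (corner5 h5) r5
    rwa [corner5_mul _ _ _ (supp5_mul sM2 sM1), corner5_mul _ _ _ sM2,
      corner5_mul _ _ _ (supp5_mul sN1 sM2), corner5_mul _ _ _ sN1,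
      corner5_loc3, corner5_loc3, corner5_loc3, corner5_loc3] at this
  rw [show (1+1 : ℕ) = 2 from rfl] at e4 e5
  rw [loc3_51, loc3_52, loc3_51, loc3_52] at e4
  rw [loc3_51, loc3_52, loc3_51, loc3_52] at e5
  rw [loc3_51, loc3_51] at e3
  -- n00 = 1
  have q00 := congrFun (congrFun e4 0) 0
  have q01 := congrFun (congrFun e4 0) 1
  have q02 := congrFun (congrFun e4 0) 2
  have q10 := congrFun (congrFun e5 1) 0
  have q20 := congrFun (congrFun e5 2) 0
  have q11 := congrFun (congrFun e3 1) 1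
  have q21 := congrFun (congrFun e3 2) 1
  simp [Matrix.mul_apply, Fin.sum_univ_five, hMdef, Matrix.vecHead, Matrix.vecTail] at q00 q01 q02 q10 q20 q11 q21
  refine ⟨q00, q01, q02, ?_, ?_, ?_, ?_⟩
  · exact q10.symm
  · exact q20.symm
  · field_simp
    linear_combination q11
  · exact mul_left_cancel₀ hb (by linear_combination -q21)
end

section
/- Let n ≥ 3 and let a, c, t ∈ ℂ with c ≠ 0 and a ≠ 1. Put M = [[a, (1−a)/c],[c, 0]] and N = [[1−(1−a)(1−t), ((1−a)/c)(1−t)],[c(1−t), t]], and for 1 ≤ i ≤ n−1 set σᵢ = Lᵢ(M) and τᵢ = Lᵢ(N) in Mₙ(ℂ). Then all defining relations of SMₙ hold: σᵢσⱼ = σⱼσᵢ whenever |i−j| ≥ 2; σᵢσ_{i+1}σᵢ = σ_{i+1}σᵢσ_{i+1} for 1 ≤ i ≤ n−2; τᵢτⱼ = τⱼτᵢ and τᵢσⱼ = σⱼτᵢ whenever |i−j| ≥ 2; σᵢτᵢ = τᵢσᵢ for 1 ≤ i ≤ n−1; and σᵢσ_{i+1}τᵢ = τ_{i+1}σᵢσ_{i+1}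 and σ_{i+1}σᵢτ_{i+1} = τᵢσ_{i+1}σᵢ for 1 ≤ i ≤ n−2. -/
/-!
Write `Lᵢ(P) = 1 + Eᵀ (P - 1) E`, where `E` is the `2 × n` matrix of the inclusion of the
coordinates `i, i + 1` into `Fin n`. Since `E Eᵀ = 1`, the map `P ↦ Lᵢ(P)` is multiplicative,
and since `E Fᵀ = 0` for inclusions with disjoint images, `Lᵢ(P)` and `Lⱼ(Q)` commute when
`|i - j| ≥ 2`.
Factoring the inclusions of `i, i + 1` and of `i + 1, i + 2` through the inclusion of
`i, i + 1, i + 2` reduces the braid relation to `n = 3`, where it is a direct computation using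
`bc = 1 - a` for `M = [[a, b], [c, 0]]`. Finally `N = (1 - t) M + t`, and `P ↦ Lᵢ(P)` preserves
affine combinations with the identity, so `τᵢ = (1 - t) σᵢ + t` and every relation involving the
`τᵢ` follows from those for the `σᵢ`.
-/

open Matrix

def loc2 (n i : ℕ) (P : Matrix (Fin 2) (Fin 2) ℂ) : Matrix (Fin n) (Fin n) ℂ :=
  Matrix.of fun r s =>
    if (r : ℕ) = i - 1 ∧ (s : ℕ) = i - 1 then P 0 0
    else if (r : ℕ) = i - 1 ∧ (s : ℕ) = i then P 0 1
    else if (r : ℕ) = i ∧ (s : ℕ) = i - 1 then P 1 0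
    else if (r : ℕ) = i ∧ (s : ℕ) = i then P 1 1
    else if r = s then 1 else 0

namespace Function.Embedding

variable {ι κ μ : Type*} (R : Type*)

def toMatrix [DecidableEq κ] [Zero R] [One R] (e : ι ↪ κ) : Matrix ι κ R :=
  of fun i j => if e i = j then 1 else 0

@[simp]
theorem toMatrix_apply [DecidableEq κ] [Zero R] [One R] (e : ι ↪ κ) (i : ι) (j : κ) :
    e.toMatrix R i j = if e i = j then 1 else 0 := rfl

variable [NonAssocSemiring R]

theorem toMatrix_mul_transpose_toMatrix [DecidableEq ι] [DecidableEq κ] [Fintype κ]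
    (e : ι ↪ κ) : e.toMatrix R * (e.toMatrix R)ᵀ = 1 := by
  ext i j
  simp [Matrix.mul_apply, one_apply]

theorem toMatrix_mul_transpose_toMatrix_of_disjoint [DecidableEq μ] [Fintype μ] {e : ι ↪ μ}
    {f : κ ↪ μ} (h : Disjoint (Set.range e) (Set.range f)) :
    e.toMatrix R * (f.toMatrix R)ᵀ = 0 := by
  ext i j
  simp [Matrix.mul_apply, Set.disjoint_range_iff.mp h i j]

theorem toMatrix_trans [DecidableEq κ] [DecidableEq μ] [Fintype κ] (f : ι ↪ κ) (e : κ ↪ μ) :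
    (f.trans e).toMatrix R = f.toMatrix R * e.toMatrix R := by
  ext i j
  rw [Matrix.mul_apply, Finset.sum_eq_single (f i) (fun k _ hk => by simp [Ne.symm hk]) (by simp)]
  simp

end Function.Embedding

namespace Matrix

variable {ι κ μ R : Type*} [Fintype ι] [Fintype κ] [Fintype μ] [DecidableEq ι] [DecidableEq κ]
  [DecidableEq μ]

section Semiring

variable [Semiring R]

def extendByZero (e : ι ↪ κ) : Matrix ι ι R →ₙ+* Matrix κ κ R where
  toFun X := (e.toMatrix R)ᵀ * X * e.toMatrix R
  map_zero' := by simp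
  map_add' X Y := by simp [Matrix.mul_add, Matrix.add_mul]
  map_mul' X Y := by
    calc (e.toMatrix R)ᵀ * (X * Y) * e.toMatrix R
        = (e.toMatrix R)ᵀ * X * (e.toMatrix R * (e.toMatrix R)ᵀ) * Y * e.toMatrix R := by
          rw [e.toMatrix_mul_transpose_toMatrix R, Matrix.mul_one, Matrix.mul_assoc _ X]
      _ = _ := by simp only [Matrix.mul_assoc]

theorem extendByZero_apply (e : ι ↪ κ) (X : Matrix ι ι R) :
    extendByZero e X = (e.toMatrix R)ᵀ * X * e.toMatrix R := rfl

theorem extendByZero_mul_extendByZero_of_disjoint {e : ι ↪ μ} {f : κ ↪ μ}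
    (h : Disjoint (Set.range e) (Set.range f)) (X : Matrix ι ι R) (Y : Matrix κ κ R) :
    extendByZero e X * extendByZero f Y = 0 := by
  rw [extendByZero_apply, extendByZero_apply]
  calc (e.toMatrix R)ᵀ * X * e.toMatrix R * ((f.toMatrix R)ᵀ * Y * f.toMatrix R)
      = (e.toMatrix R)ᵀ * X * (e.toMatrix R * (f.toMatrix R)ᵀ) * Y * f.toMatrix R := by
        simp only [Matrix.mul_assoc]
    _ = 0 := by
        rw [Function.Embedding.toMatrix_mul_transpose_toMatrix_of_disjoint R h]
        simp

end Semiring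

section Ring

variable [Ring R]

def extendByOne (e : ι ↪ κ) : Matrix ι ι R →* Matrix κ κ R where
  toFun A := 1 + extendByZero e (A - 1)
  map_one' := by simp
  map_mul' A B := by
    have hAB : A * B - 1 = (A - 1) + (B - 1) + (A - 1) * (B - 1) := by noncomm_ring
    simp only [hAB, map_add, map_mul]
    noncomm_ring

theorem extendByOne_apply (e : ι ↪ κ) (A : Matrix ι ι R) :
    extendByOne e A = 1 + extendByZero e (A - 1) := rfl

theorem commute_extendByOne_of_disjoint {e : ι ↪ μ} {f : κ ↪ μ}
    (h : Disjoint (Set.range e) (Set.range f)) (A : Matrix ι ι R) (B : Matrix κ κ R) :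
    Commute (extendByOne e A) (extendByOne f B) := by
  have hef := extendByZero_mul_extendByZero_of_disjoint h (A - 1) (B - 1)
  have hfe := extendByZero_mul_extendByZero_of_disjoint h.symm (B - 1) (A - 1)
  simp only [Commute, SemiconjBy, extendByOne_apply, Matrix.add_mul, Matrix.mul_add,
    Matrix.mul_one, Matrix.one_mul, hef, hfe]
  abel

end Ring

section CommRing

variable [CommRing R]

theorem extendByZero_extendByZero (f : ι ↪ κ) (e : κ ↪ μ) (X : Matrix ι ι R) :
    extendByZero e (extendByZero f X) = extendByZero (f.trans e) X := by
  simp only [extendByZero_apply, Function.Embedding.toMatrix_trans, transpose_mul, Matrix.mul_assoc]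

theorem extendByOne_extendByOne (f : ι ↪ κ) (e : κ ↪ μ) (A : Matrix ι ι R) :
    extendByOne e (extendByOne f A) = extendByOne (f.trans e) A := by
  simp only [extendByOne_apply, add_sub_cancel_left, extendByZero_extendByZero]

end CommRing

end Matrix

def windowEmb {m n : ℕ} (k : ℕ) (h : k + m ≤ n) : Fin m ↪ Fin n :=
  (Fin.natAddEmb k).trans (Fin.castLEEmb h)

@[simp]
theorem windowEmb_apply_val {m n k : ℕ} (h : k + m ≤ n) (p : Fin m) :
    (windowEmb k h p : ℕ) = k + p := rfl

theorem windowEmb_trans {l m n j k : ℕ} (h₁ : j + l ≤ m) (h₂ : k + m ≤ n) :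
    (windowEmb j h₁).trans (windowEmb k h₂) = windowEmb (k + j) (by omega) := by
  ext p
  simp [Nat.add_assoc]

theorem loc2_succ_eq_extendByOne {n k : ℕ} (h : k + 2 ≤ n) (P : Matrix (Fin 2) (Fin 2) ℂ) :
    loc2 n (k + 1) P = extendByOne (windowEmb k h) P := by
  ext r s
  simp only [loc2, add_tsub_cancel_right, Fin.isValue, Fin.ext_iff, of_apply, extendByOne_apply,
    extendByZero_apply, Matrix.add_apply, one_apply, Matrix.mul_apply, transpose_apply,
    Function.Embedding.toMatrix_apply, windowEmb_apply_val, Matrix.sub_apply, ite_mul, one_mul,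
    zero_mul, Fin.sum_univ_two, Fin.coe_ofNat_eq_mod, Nat.zero_mod, add_zero, Nat.mod_succ, mul_ite,
    mul_one, mul_zero, ↓reduceIte, one_ne_zero, sub_zero, zero_ne_one]
  split_ifs <;> first | ring1 | omega

theorem loc2_three_braid {a b c : ℂ} (h : b * c = 1 - a) :
    loc2 3 1 !![a, b; c, 0] * loc2 3 2 !![a, b; c, 0] * loc2 3 1 !![a, b; c, 0]
      = loc2 3 2 !![a, b; c, 0] * loc2 3 1 !![a, b; c, 0] * loc2 3 2 !![a, b; c, 0] := by
  obtain rfl : a = 1 - b * c := by linear_combination h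
  ext r s
  fin_cases r <;> fin_cases s <;> simp [loc2, Matrix.mul_apply, Fin.sum_univ_three] <;> ring

theorem loc2_smul_add_smul_one (n i : ℕ) (s : ℂ) (P : Matrix (Fin 2) (Fin 2) ℂ) :
    loc2 n i (s • P + (1 - s) • 1) = s • loc2 n i P + (1 - s) • 1 := by
  ext r q
  simp only [loc2, of_apply, Matrix.add_apply, Matrix.smul_apply, one_apply, smul_eq_mul,
    Fin.ext_iff]
  split_ifs <;> first | ring1 | omega

theorem loc2_succ_commute {n k l : ℕ} (hkl : k + 2 ≤ l) (hl : l + 2 ≤ n)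
    (P Q : Matrix (Fin 2) (Fin 2) ℂ) : Commute (loc2 n (k + 1) P) (loc2 n (l + 1) Q) := by
  rw [loc2_succ_eq_extendByOne (by omega), loc2_succ_eq_extendByOne hl]
  refine commute_extendByOne_of_disjoint (Set.disjoint_range_iff.mpr fun p q => ?_) P Q
  simp only [ne_eq, Fin.ext_iff, windowEmb_apply_val]
  omega

theorem loc2_commute {n i j : ℕ} (hi : 1 ≤ i) (hj : 1 ≤ j) (hin : i < n) (hjn : j < n)
    (hij : i + 2 ≤ j ∨ j + 2 ≤ i) (P Q : Matrix (Fin 2) (Fin 2) ℂ) :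
    Commute (loc2 n i P) (loc2 n j Q) := by
  obtain ⟨k, rfl⟩ := Nat.exists_eq_add_of_le' hi
  obtain ⟨l, rfl⟩ := Nat.exists_eq_add_of_le' hj
  rcases hij with h | h
  · exact loc2_succ_commute (by omega) (by omega) P Q
  · exact (loc2_succ_commute (by omega) (by omega) Q P).symm

theorem loc2_eq_extendByOne_loc2_three {n k j : ℕ} (h : k + 3 ≤ n) (hj : j + 2 ≤ 3)
    (P : Matrix (Fin 2) (Fin 2) ℂ) :
    loc2 n (k + j + 1) P = extendByOne (windowEmb k h) (loc2 3 (j + 1) P) := by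
  rw [loc2_succ_eq_extendByOne hj, extendByOne_extendByOne, windowEmb_trans,
    loc2_succ_eq_extendByOne]

theorem loc2_braid_of_loc2_three {n i : ℕ} (hi : 1 ≤ i) (hin : i + 2 ≤ n)
    {P : Matrix (Fin 2) (Fin 2) ℂ}
    (hP : loc2 3 1 P * loc2 3 2 P * loc2 3 1 P = loc2 3 2 P * loc2 3 1 P * loc2 3 2 P) :
    loc2 n i P * loc2 n (i + 1) P * loc2 n i P
      = loc2 n (i + 1) P * loc2 n i P * loc2 n (i + 1) P := by
  obtain ⟨k, rfl⟩ := Nat.exists_eq_add_of_le' hi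
  have h : k + 3 ≤ n := by omega
  have hσ₁ : loc2 n (k + 1) P = _ := loc2_eq_extendByOne_loc2_three h (j := 0) (by norm_num) P
  have hσ₂ : loc2 n (k + 1 + 1) P = _ := loc2_eq_extendByOne_loc2_three h (j := 1) (by norm_num) P
  rw [hσ₁, hσ₂, ← map_mul, ← map_mul, hP, map_mul, map_mul]

theorem mul_mul_smul_add_smul_one_of_braid {K A : Type*} [CommSemiring K] [Semiring A]
    [Algebra K A] {x y : A} (h : x * y * x = y * x * y) (s u : K) :
    x * y * (s • x + u • 1) = (s • y + u • 1) * x * y := by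
  simp only [mul_add, add_mul, mul_smul_comm, smul_mul_assoc, mul_one, one_mul, h]

theorem stmt18_general (n : ℕ) (a c t : ℂ) (hc : c ≠ 0)
    (M N : Matrix (Fin 2) (Fin 2) ℂ)
    (hM : M = !![a, (1 - a) / c; c, 0])
    (hN : N = !![1 - (1 - a) * (1 - t), ((1 - a) / c) * (1 - t); c * (1 - t), t]) :
    (∀ i j : ℕ, 1 ≤ i → i ≤ n - 1 → 1 ≤ j → j ≤ n - 1 → (i + 2 ≤ j ∨ j + 2 ≤ i) →
        loc2 n i M * loc2 n j M = loc2 n j M * loc2 n i M) ∧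
    (∀ i : ℕ, 1 ≤ i → i ≤ n - 2 →
        loc2 n i M * loc2 n (i + 1) M * loc2 n i M
          = loc2 n (i + 1) M * loc2 n i M * loc2 n (i + 1) M) ∧
    (∀ i j : ℕ, 1 ≤ i → i ≤ n - 1 → 1 ≤ j → j ≤ n - 1 → (i + 2 ≤ j ∨ j + 2 ≤ i) →
        loc2 n i N * loc2 n j N = loc2 n j N * loc2 n i N) ∧
    (∀ i j : ℕ, 1 ≤ i → i ≤ n - 1 → 1 ≤ j → j ≤ n - 1 → (i + 2 ≤ j ∨ j + 2 ≤ i) →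
        loc2 n i N * loc2 n j M = loc2 n j M * loc2 n i N) ∧
    (∀ i : ℕ, 1 ≤ i → i ≤ n - 1 →
        loc2 n i M * loc2 n i N = loc2 n i N * loc2 n i M) ∧
    (∀ i : ℕ, 1 ≤ i → i ≤ n - 2 →
        loc2 n i M * loc2 n (i + 1) M * loc2 n i N
          = loc2 n (i + 1) N * loc2 n i M * loc2 n (i + 1) M) ∧
    (∀ i : ℕ, 1 ≤ i → i ≤ n - 2 →
        loc2 n (i + 1) M * loc2 n i M * loc2 n (i + 1) N
          = loc2 n i N * loc2 n (i + 1) M * loc2 n i M) := by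
  have hNM : N = (1 - t) • M + (1 - (1 - t)) • 1 := by
    subst hM hN
    ext r s
    fin_cases r <;> fin_cases s <;> simp <;> ring
  have hτ (i : ℕ) : loc2 n i N = (1 - t) • loc2 n i M + (1 - (1 - t)) • 1 := by
    rw [hNM, loc2_smul_add_smul_one]
  have hbraid (i : ℕ) (hi : 1 ≤ i) (hin : i ≤ n - 2) :
      loc2 n i M * loc2 n (i + 1) M * loc2 n i M
        = loc2 n (i + 1) M * loc2 n i M * loc2 n (i + 1) M :=
    loc2_braid_of_loc2_three hi (by omega) (hM ▸ loc2_three_braid (div_mul_cancel₀ _ hc))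
  refine ⟨fun i j hi hin hj hjn hij => (loc2_commute hi hj (by omega) (by omega) hij M M).eq,
    hbraid,
    fun i j hi hin hj hjn hij => (loc2_commute hi hj (by omega) (by omega) hij N N).eq,
    fun i j hi hin hj hjn hij => (loc2_commute hi hj (by omega) (by omega) hij N M).eq,
    fun i _ _ => ?_, fun i hi hin => ?_, fun i hi hin => ?_⟩
  · rw [hτ]
    exact (((Commute.refl _).smul_right _).add_right ((Commute.one_right _).smul_right _)).eq
  · rw [hτ, hτ]
    exact mul_mul_smul_add_smul_one_of_braid (hbraid i hi hin) _ _
  · rw [hτ, hτ]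
    exact mul_mul_smul_add_smul_one_of_braid (hbraid i hi hin).symm _ _

theorem stmt18 (n : ℕ) (hn : 3 ≤ n) (a c t : ℂ) (hc : c ≠ 0) (ha : a ≠ 1)
    (M N : Matrix (Fin 2) (Fin 2) ℂ)
    (hM : M = !![a, (1 - a) / c; c, 0])
    (hN : N = !![1 - (1 - a) * (1 - t), ((1 - a) / c) * (1 - t); c * (1 - t), t]) :
    (∀ i j : ℕ, 1 ≤ i → i ≤ n - 1 → 1 ≤ j → j ≤ n - 1 → (i + 2 ≤ j ∨ j + 2 ≤ i) →
        loc2 n i M * loc2 n j M = loc2 n j M * loc2 n i M) ∧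
    (∀ i : ℕ, 1 ≤ i → i ≤ n - 2 →
        loc2 n i M * loc2 n (i + 1) M * loc2 n i M
          = loc2 n (i + 1) M * loc2 n i M * loc2 n (i + 1) M) ∧
    (∀ i j : ℕ, 1 ≤ i → i ≤ n - 1 → 1 ≤ j → j ≤ n - 1 → (i + 2 ≤ j ∨ j + 2 ≤ i) →
        loc2 n i N * loc2 n j N = loc2 n j N * loc2 n i N) ∧
    (∀ i j : ℕ, 1 ≤ i → i ≤ n - 1 → 1 ≤ j → j ≤ n - 1 → (i + 2 ≤ j ∨ j + 2 ≤ i) →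
        loc2 n i N * loc2 n j M = loc2 n j M * loc2 n i N) ∧
    (∀ i : ℕ, 1 ≤ i → i ≤ n - 1 →
        loc2 n i M * loc2 n i N = loc2 n i N * loc2 n i M) ∧
    (∀ i : ℕ, 1 ≤ i → i ≤ n - 2 →
        loc2 n i M * loc2 n (i + 1) M * loc2 n i N
          = loc2 n (i + 1) N * loc2 n i M * loc2 n (i + 1) M) ∧
    (∀ i : ℕ, 1 ≤ i → i ≤ n - 2 →
        loc2 n (i + 1) M * loc2 n i M * loc2 n (i + 1) N
          = loc2 n i N * loc2 n (i + 1) M * loc2 n i M) :=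
  stmt18_general n a c t hc M N hM hN
end
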